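/- In any B_{q,t}-module datum, the operators e_m on V₀ satisfy the quadratic relation of the elliptic Hall algebra: setting σ₁ := q + t + q^{−1}t^{−1} and σ₂ := qt + q^{−1} + t^{−1}, for all m, n ∈ ℤ one has e_{n+3}e_m − σ₁ e_{n+2}e_{m+1} + σ₂ e_{n+1}e_{m+2} − e_n e_{m+3} = −e_{m+3}e_n + σ₁ e_{m+2}e_{n+1} − σ₂ e_{m+1}e_{n+2} + e_m e_{n+3} as operators on V₀. Equivalently, the generating series e(𝐳) = Σ_{m∈ℤ} e_m 𝐳^{−m} satisfies g(𝐳,𝐰)e(𝐳)e(𝐰) = −g(𝐰,𝐳)e(𝐰)e(𝐳), where g(𝐳,𝐰) = (𝐳−q𝐰)(𝐳−t𝐰)(𝐳−q^{−1}t^{−1}𝐰). -/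
import Mathlib


/- Common setup: the field K = ℚ(q,t) and the notion of a B_{q,t}-module datum,
i.e. a family of K-vector spaces V_k (k ≥ 0) together with maps d₊ : V_k → V_{k+1},
d₋ : V_k → V_{k−1}, invertible operators z_i (1 ≤ i ≤ k) and operators T_i
(1 ≤ i ≤ k−1) on V_k (the T_i are invertible as a consequence of the quadratic
Hecke relation, so we record them as units), subject to the defining relations
of the double Dyck path algebra 𝔹_{q,t}.  Operators compose right-to-left;
`Module.End` multiplication is composition. -/

noncomputable section

/-- The field ℚ(q,t). -/
abbrev Kq : Type := FractionRing (MvPolynomial (Fin 2) ℚ)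

/-- The variable q ∈ ℚ(q,t). -/
def qv : Kq := algebraMap (MvPolynomial (Fin 2) ℚ) Kq (MvPolynomial.X 0)

/-- The variable t ∈ ℚ(q,t). -/
def tv : Kq := algebraMap (MvPolynomial (Fin 2) ℚ) Kq (MvPolynomial.X 1)

/-- φ := (q−1)^{−1}(d₊d₋ − d₋d₊), an operator on V_{k+1}. -/
def phiE {V : ℕ → Type*} [∀ k, AddCommGroup (V k)] [∀ k, Module Kq (V k)]
    (dp : ∀ k, V k →ₗ[Kq] V (k + 1)) (dm : ∀ k, V (k + 1) →ₗ[Kq] V k) (k : ℕ) :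
    Module.End Kq (V (k + 1)) :=
  (qv - 1)⁻¹ • (dp k ∘ₗ dm k - dm (k + 1) ∘ₗ dp (k + 1))

/-- A B_{q,t}-module datum on the family of K-vector spaces `V`.
`z k i` is the operator z_i on V_k (meaningful for 1 ≤ i ≤ k) and `T k i` is
the operator T_i on V_k (meaningful for 1 ≤ i ≤ k−1); all relations are imposed
on every V_k on which all their factors are defined. -/
structure BqtDatum (V : ℕ → Type*) [∀ k, AddCommGroup (V k)] [∀ k, Module Kq (V k)] where
  /-- d₊ : V_k → V_{k+1} -/
  dp : ∀ k, V k →ₗ[Kq] V (k + 1)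
  /-- d₋ : V_{k+1} → V_k -/
  dm : ∀ k, V (k + 1) →ₗ[Kq] V k
  /-- the pairwise commuting invertible operators z_1, …, z_k on V_k -/
  z : ∀ k, ℕ → (Module.End Kq (V k))ˣ
  /-- the operators T_1, …, T_{k−1} on V_k -/
  T : ∀ k, ℕ → (Module.End Kq (V k))ˣ
  z_comm : ∀ k i j, 1 ≤ i → i ≤ k → 1 ≤ j → j ≤ k → z k i * z k j = z k j * z k i
  hecke : ∀ k i, 1 ≤ i → i + 1 ≤ k →
    ((T k i : Module.End Kq (V k)) - 1) * ((T k i : Module.End Kq (V k)) + qv • 1) = 0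
  braid : ∀ k i, 1 ≤ i → i + 2 ≤ k →
    T k i * T k (i + 1) * T k i = T k (i + 1) * T k i * T k (i + 1)
  T_far : ∀ k i j, 1 ≤ i → i + 1 ≤ k → 1 ≤ j → j + 1 ≤ k → i + 1 < j →
    T k i * T k j = T k j * T k i
  TzT : ∀ k i, 1 ≤ i → i + 1 ≤ k →
    (((T k i)⁻¹ : (Module.End Kq (V k))ˣ) : Module.End Kq (V k)) *
        (z k (i + 1) : Module.End Kq (V k)) *
        (((T k i)⁻¹ : (Module.End Kq (V k))ˣ) : Module.End Kq (V k)) =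
      qv⁻¹ • (z k i : Module.End Kq (V k))
  zT_far : ∀ k i j, 1 ≤ i → i ≤ k → 1 ≤ j → j + 1 ≤ k → i ≠ j → i ≠ j + 1 →
    z k i * T k j = T k j * z k i
  dmdmT : ∀ k, (dm k ∘ₗ dm (k + 1)) ∘ₗ (T (k + 2) (k + 1) : Module.End Kq (V (k + 2))) =
    dm k ∘ₗ dm (k + 1)
  dmT : ∀ k i, 1 ≤ i → i + 1 ≤ k →
    dm k ∘ₗ (T (k + 1) i : Module.End Kq (V (k + 1))) = (T k i : Module.End Kq (V k)) ∘ₗ dm k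
  Tdpdp : ∀ k, (T (k + 2) 1 : Module.End Kq (V (k + 2))) ∘ₗ (dp (k + 1) ∘ₗ dp k) =
    dp (k + 1) ∘ₗ dp k
  dpT : ∀ k i, 1 ≤ i → i + 1 ≤ k →
    dp k ∘ₗ (T k i : Module.End Kq (V k)) = (T (k + 1) (i + 1) : Module.End Kq (V (k + 1))) ∘ₗ dp k
  phidm : ∀ k, qv • (phiE dp dm k ∘ₗ dm (k + 1)) =
    (dm (k + 1) ∘ₗ phiE dp dm (k + 1)) ∘ₗ (T (k + 2) (k + 1) : Module.End Kq (V (k + 2)))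
  Tphidp : ∀ k, (T (k + 2) 1 : Module.End Kq (V (k + 2))) ∘ₗ (phiE dp dm (k + 1) ∘ₗ dp (k + 1)) =
    qv • (dp (k + 1) ∘ₗ phiE dp dm k)
  zdm : ∀ k i, 1 ≤ i → i ≤ k →
    (z k i : Module.End Kq (V k)) ∘ₗ dm k = dm k ∘ₗ (z (k + 1) i : Module.End Kq (V (k + 1)))
  dpz : ∀ k i, 1 ≤ i → i ≤ k →
    dp k ∘ₗ (z k i : Module.End Kq (V k)) = (z (k + 1) (i + 1) : Module.End Kq (V (k + 1))) ∘ₗ dp k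
  zmain : ∀ k, (z (k + 1) 1 : Module.End Kq (V (k + 1))) ∘ₗ
      (qv • (dp k ∘ₗ dm k) - dm (k + 1) ∘ₗ dp (k + 1)) =
    (qv * tv) • ((dp k ∘ₗ dm k - dm (k + 1) ∘ₗ dp (k + 1)) ∘ₗ
      (z (k + 1) (k + 1) : Module.End Kq (V (k + 1))))

namespace BqtDatum

variable {V : ℕ → Type*} [∀ k, AddCommGroup (V k)] [∀ k, Module Kq (V k)]

/-- e_m := d₋ z₁^m d₊ : V₀ → V₀. -/
def eOp (D : BqtDatum V) (m : ℤ) : Module.End Kq (V 0) :=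
  D.dm 0 ∘ₗ ((D.z 1 1 ^ m : (Module.End Kq (V 1))ˣ) : Module.End Kq (V 1)) ∘ₗ D.dp 0

end BqtDatum

namespace BqtAux

open BqtDatum

lemma qv_ne : qv ≠ 0 := by
  have h := IsFractionRing.injective (MvPolynomial (Fin 2) ℚ) Kq
  simpa [qv, map_eq_zero_iff _ h] using (MvPolynomial.X_ne_zero (R := ℚ) (0 : Fin 2))

lemma tv_ne : tv ≠ 0 := by
  have h := IsFractionRing.injective (MvPolynomial (Fin 2) ℚ) Kq
  simpa [tv, map_eq_zero_iff _ h] using (MvPolynomial.X_ne_zero (R := ℚ) (1 : Fin 2))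

/-! Generic scalar-rearrangement helpers over an arbitrary field (the `module` and
`match_scalars` tactics are used here in a generic setting). -/

section Generic
variable {K M : Type*} [Field K] [AddCommGroup M] [Module K M]

lemma genA (q : K) (x y z : M) (h : x - y + q•(y - z) = 0) : x = (1-q)•y + q•z := by
  linear_combination (norm := module) h

lemma genB (q : K) (x y : M) : (1-q)•x + q•y + (q-1)•x = q•y := by module

lemma genD (c : K) (x y z : M) : (x + c•y) + (z - c•y) = z + x := by module

lemma genF (q : K) (x : M) : x + (q-1)•x = q•x := by module

lemma genKey (q t : K) (hq : q ≠ 0) (ht : t ≠ 0) (x y : M) :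
    y + (q-1)•y + (q-1)•x + (q-1)•(q•x) - (q + q*t + (q*t)⁻¹)•(q•x)
      + (q^2*t + t⁻¹ + 1)•x - q•y = 0 := by
  match_scalars <;> field_simp <;> ring

lemma genFinal (q t : K) (hq : q ≠ 0) (ht : t ≠ 0)
    (A3 A2 A1 A0 B3 B2 B1 B0 E3 E2 E1 E0 H3 H2 H1 H0 : M)
    (hS : (E3 + H3) - (q + q*t + (q*t)⁻¹) • (E2 + H2)
        + (q^2*t + t⁻¹ + 1) • (E1 + H1) - q • (E0 + H0) = 0)
    (h1 : q • A3 - E3 = (q*t) • A2 - (q*t) • E2)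
    (h2 : q • A2 - E2 = (q*t) • A1 - (q*t) • E1)
    (h3 : q • A1 - E1 = (q*t) • A0 - (q*t) • E0)
    (h4 : q • B3 - H3 = (q*t) • B2 - (q*t) • H2)
    (h5 : q • B2 - H2 = (q*t) • B1 - (q*t) • H1)
    (h6 : q • B1 - H1 = (q*t) • B0 - (q*t) • H0) :
    A3 - (q + t + (q*t)⁻¹) • A2 + (q*t + q⁻¹ + t⁻¹) • A1 - A0
      = -B3 + (q + t + (q*t)⁻¹) • B2 - (q*t + q⁻¹ + t⁻¹) • B1 + B0 := by
  linear_combination (norm := (match_scalars <;> field_simp <;> ring))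
    q⁻¹ • hS + q⁻¹ • h1 - (q⁻¹*(q + (q*t)⁻¹)) • h2 + (q⁻¹*t⁻¹) • h3
      + q⁻¹ • h4 - (q⁻¹*(q + (q*t)⁻¹)) • h5 + (q⁻¹*t⁻¹) • h6

end Generic

variable {V : ℕ → Type*} [∀ k, AddCommGroup (V k)] [∀ k, Module Kq (V k)] (D : BqtDatum V)

/-- generic intertwining, nat powers -/
lemma inter_pow {M N : Type*} [AddCommGroup M] [AddCommGroup N]
    [Module Kq M] [Module Kq N] (f : M →ₗ[Kq] N) (u : (Module.End Kq M)ˣ)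
    (v : (Module.End Kq N)ˣ) (h : (v : Module.End Kq N) ∘ₗ f = f ∘ₗ (u : Module.End Kq M)) :
    ∀ n : ℕ, ((v ^ n : (Module.End Kq N)ˣ) : Module.End Kq N) ∘ₗ f
      = f ∘ₗ ((u ^ n : (Module.End Kq M)ˣ) : Module.End Kq M) := by
  intro n
  induction n with
  | zero => ext x; rfl
  | succ n ih =>
      rw [show (v ^ (n+1) : (Module.End Kq N)ˣ) = v ^ n * v from by rw [pow_succ],
        show (u ^ (n+1) : (Module.End Kq M)ˣ) = u ^ n * u from by rw [pow_succ]]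
      ext x
      have h1 := LinearMap.congr_fun h x
      have h2 := LinearMap.congr_fun ih (((u : Module.End Kq M)) x)
      simp only [LinearMap.comp_apply, Units.val_mul, Module.End.mul_apply] at *
      rw [h1, h2]

lemma inter_inv {M N : Type*} [AddCommGroup M] [AddCommGroup N]
    [Module Kq M] [Module Kq N] (f : M →ₗ[Kq] N) (u : (Module.End Kq M)ˣ)
    (v : (Module.End Kq N)ˣ) (h : (v : Module.End Kq N) ∘ₗ f = f ∘ₗ (u : Module.End Kq M)) :
    ((v⁻¹ : (Module.End Kq N)ˣ) : Module.End Kq N) ∘ₗ f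
      = f ∘ₗ ((u⁻¹ : (Module.End Kq M)ˣ) : Module.End Kq M) := by
  ext x
  have h1 := LinearMap.congr_fun h (((u⁻¹ : (Module.End Kq M)ˣ) : Module.End Kq M) x)
  simp only [LinearMap.comp_apply] at h1 ⊢
  have hu : (u : Module.End Kq M) (((u⁻¹ : (Module.End Kq M)ˣ) : Module.End Kq M) x) = x := by
    rw [← Module.End.mul_apply, u.mul_inv, Module.End.one_apply]
  rw [hu] at h1
  rw [← h1, ← Module.End.mul_apply, v.inv_mul, Module.End.one_apply]

lemma inter_zpow {M N : Type*} [AddCommGroup M] [AddCommGroup N]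
    [Module Kq M] [Module Kq N] (f : M →ₗ[Kq] N) (u : (Module.End Kq M)ˣ)
    (v : (Module.End Kq N)ˣ) (h : (v : Module.End Kq N) ∘ₗ f = f ∘ₗ (u : Module.End Kq M))
    (m : ℤ) :
    ((v ^ m : (Module.End Kq N)ˣ) : Module.End Kq N) ∘ₗ f
      = f ∘ₗ ((u ^ m : (Module.End Kq M)ˣ) : Module.End Kq M) := by
  cases m with
  | ofNat n => rw [Int.ofNat_eq_coe, zpow_natCast, zpow_natCast]; exact inter_pow f u v h n
  | negSucc n =>
      rw [zpow_negSucc, zpow_negSucc]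
      exact inter_inv f _ _ (inter_pow f u v h (n+1))

/-- The operator T₁ on V₂. -/
def TE : Module.End Kq (V 2) := (D.T 2 1 : (Module.End Kq (V 2))ˣ)
/-- The operator z₁ on V₂. -/
def aE : Module.End Kq (V 2) := (D.z 2 1 : (Module.End Kq (V 2))ˣ)
/-- The operator z₂ on V₂. -/
def bE : Module.End Kq (V 2) := (D.z 2 2 : (Module.End Kq (V 2))ˣ)

/-- The sandwich d₋d₋ X d₊d₊ : V₀ → V₀. -/
def SS (X : Module.End Kq (V 2)) : Module.End Kq (V 0) :=
  D.dm 0 ∘ₗ D.dm 1 ∘ₗ X ∘ₗ D.dp 1 ∘ₗ D.dp 0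

/-- E_{a,b} = d₋d₋ z₁^a z₂^b d₊d₊. -/
def EE (a b : ℤ) : Module.End Kq (V 0) :=
  SS D ((↑(D.z 2 1 ^ a) : Module.End Kq (V 2)) * (↑(D.z 2 2 ^ b) : Module.End Kq (V 2)))

lemma SS_add (X Y : Module.End Kq (V 2)) : SS D (X + Y) = SS D X + SS D Y := by
  ext x; simp [SS]

lemma SS_smul (c : Kq) (X : Module.End Kq (V 2)) : SS D (c • X) = c • SS D X := by
  ext x; simp [SS]

lemma SS_dropL (X : Module.End Kq (V 2)) : SS D (TE D * X) = SS D X := by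
  ext x
  simp only [SS, TE, LinearMap.comp_apply, Module.End.mul_apply]
  have h := LinearMap.congr_fun (D.dmdmT 0) (X ((D.dp 1) ((D.dp 0) x)))
  simp only [LinearMap.comp_apply] at h
  exact h

lemma SS_dropR (X : Module.End Kq (V 2)) : SS D (X * TE D) = SS D X := by
  ext x
  simp only [SS, TE, LinearMap.comp_apply, Module.End.mul_apply]
  have h := LinearMap.congr_fun (D.Tdpdp 0) x
  simp only [LinearMap.comp_apply] at h
  rw [show ((D.T 2 1 : (Module.End Kq (V 2))ˣ) : Module.End Kq (V 2))
    ((D.dp 1) ((D.dp 0) x)) = (D.dp 1) ((D.dp 0) x) from h]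

lemma hTT : TE D * TE D = (1 - qv) • TE D + qv • 1 := by
  have h := D.hecke 2 1 (le_refl 1) (by norm_num)
  simp only [sub_mul, mul_add, one_mul, mul_smul_comm, mul_one] at h
  simp only [TE]
  exact genA qv _ _ _ h

lemma hTinv : qv • ((↑((D.T 2 1)⁻¹) : Module.End Kq (V 2))) = TE D + (qv - 1) • 1 := by
  have hmul : TE D * (↑((D.T 2 1)⁻¹) : Module.End Kq (V 2)) = 1 := by
    simp only [TE]; rw [← Units.val_mul, mul_inv_cancel, Units.val_one]
  have h2 : (TE D + (qv - 1) • 1) * TE D = qv • 1 := by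
    rw [add_mul, smul_mul_assoc, one_mul, hTT]
    exact genB qv _ _
  calc qv • ((↑((D.T 2 1)⁻¹) : Module.End Kq (V 2)))
      = (qv • (1 : Module.End Kq (V 2))) * (↑((D.T 2 1)⁻¹) : Module.End Kq (V 2)) := by
        rw [smul_mul_assoc, one_mul]
    _ = (TE D + (qv - 1) • 1) * (TE D * (↑((D.T 2 1)⁻¹) : Module.End Kq (V 2))) := by
        rw [← h2, mul_assoc]
    _ = TE D + (qv - 1) • 1 := by rw [hmul, mul_one]

lemma hTaT : TE D * aE D * TE D = qv • bE D := by
  have h := D.TzT 2 1 (le_refl 1) (by norm_num)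
  simp only [Nat.reduceAdd] at h
  have hmul : TE D * (↑((D.T 2 1)⁻¹) : Module.End Kq (V 2)) = 1 := by
    simp only [TE]; rw [← Units.val_mul, mul_inv_cancel, Units.val_one]
  have hmul' : (↑((D.T 2 1)⁻¹) : Module.End Kq (V 2)) * TE D = 1 := by
    simp only [TE]; rw [← Units.val_mul, inv_mul_cancel, Units.val_one]
  have hb : bE D = qv⁻¹ • (TE D * aE D * TE D) := by
    calc bE D = (TE D * (↑((D.T 2 1)⁻¹) : Module.End Kq (V 2))) * bE D
        * ((↑((D.T 2 1)⁻¹) : Module.End Kq (V 2)) * TE D) := by rw [hmul, hmul', one_mul, mul_one]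
      _ = TE D * ((↑((D.T 2 1)⁻¹) : Module.End Kq (V 2)) * bE D
          * (↑((D.T 2 1)⁻¹) : Module.End Kq (V 2))) * TE D := by
            simp only [mul_assoc]
      _ = TE D * (qv⁻¹ • aE D) * TE D := by
            simp only [aE, bE]; rw [h]
      _ = qv⁻¹ • (TE D * aE D * TE D) := by
            rw [mul_smul_comm, smul_mul_assoc]
  rw [hb, smul_smul, mul_inv_cancel₀ qv_ne, one_smul]

lemma rel1 : TE D * aE D = bE D * TE D + (qv - 1) • bE D := by
  have hmul : TE D * (↑((D.T 2 1)⁻¹) : Module.End Kq (V 2)) = 1 := by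
    simp only [TE]; rw [← Units.val_mul, mul_inv_cancel, Units.val_one]
  calc TE D * aE D
      = (TE D * aE D * TE D) * (↑((D.T 2 1)⁻¹) : Module.End Kq (V 2)) := by
        rw [mul_assoc (TE D * aE D), hmul, mul_one]
    _ = (qv • bE D) * (↑((D.T 2 1)⁻¹) : Module.End Kq (V 2)) := by rw [hTaT]
    _ = bE D * (qv • (↑((D.T 2 1)⁻¹) : Module.End Kq (V 2))) := by
        rw [smul_mul_assoc, mul_smul_comm]
    _ = bE D * TE D + (qv - 1) • bE D := by
        rw [hTinv, mul_add, mul_smul_comm, mul_one]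

lemma rel2 : aE D * TE D = TE D * bE D + (qv - 1) • bE D := by
  have hmul' : (↑((D.T 2 1)⁻¹) : Module.End Kq (V 2)) * TE D = 1 := by
    simp only [TE]; rw [← Units.val_mul, inv_mul_cancel, Units.val_one]
  calc aE D * TE D
      = (↑((D.T 2 1)⁻¹) : Module.End Kq (V 2)) * (TE D * aE D * TE D) := by
        rw [← mul_assoc, ← mul_assoc, hmul', one_mul]
    _ = (↑((D.T 2 1)⁻¹) : Module.End Kq (V 2)) * (qv • bE D) := by rw [hTaT]
    _ = (qv • (↑((D.T 2 1)⁻¹) : Module.End Kq (V 2))) * bE D := by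
        rw [mul_smul_comm, smul_mul_assoc]
    _ = TE D * bE D + (qv - 1) • bE D := by
        rw [hTinv, add_mul, smul_mul_assoc, one_mul]

lemma rel3 : TE D * bE D = aE D * TE D - (qv - 1) • bE D := by
  rw [rel2]
  exact (add_sub_cancel_right _ _).symm

lemma hab : aE D * bE D = bE D * aE D := by
  have h := D.z_comm 2 1 2 (le_refl 1) (by norm_num) (by norm_num) (by norm_num)
  simp only [aE, bE]
  rw [← Units.val_mul, ← Units.val_mul, h]

lemma cab : Commute (aE D) (bE D) := hab D

lemma commTs1 : Commute (TE D) (aE D + bE D) := by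
  show TE D * (aE D + bE D) = (aE D + bE D) * TE D
  rw [mul_add, add_mul, rel1, rel3]
  exact genD (qv - 1) _ _ _

lemma commTab : Commute (TE D) (aE D * bE D) := by
  show TE D * (aE D * bE D) = (aE D * bE D) * TE D
  calc TE D * (aE D * bE D) = (TE D * aE D) * bE D := by rw [mul_assoc]
    _ = (bE D * TE D + (qv - 1) • bE D) * bE D := by rw [rel1]
    _ = bE D * (TE D * bE D) + (qv - 1) • (bE D * bE D) := by
        rw [add_mul, smul_mul_assoc, mul_assoc]
    _ = bE D * (aE D * TE D - (qv - 1) • bE D) + (qv - 1) • (bE D * bE D) := by rw [rel3]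
    _ = (aE D * bE D) * TE D := by
        rw [mul_sub, mul_smul_comm, ← mul_assoc, ← hab]
        exact sub_add_cancel _ _

lemma swapO (X : Module.End Kq (V 2)) : X * bE D * aE D = X * aE D * bE D := by
  rw [mul_assoc, mul_assoc, ← hab]

lemma hsq : TE D * aE D * aE D
    = bE D * bE D * TE D + (qv - 1) • (bE D * bE D) + (qv - 1) • (bE D * aE D) := by
  rw [rel1, add_mul, smul_mul_assoc, mul_assoc, rel1, mul_add, mul_smul_comm, ← mul_assoc]

lemma hcube : TE D * aE D * aE D * aE D
    = bE D * bE D * bE D * TE D + (qv - 1) • (bE D * bE D * bE D)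
      + (qv - 1) • (bE D * bE D * aE D) + (qv - 1) • (bE D * aE D * aE D) := by
  rw [hsq, add_mul, add_mul, smul_mul_assoc, smul_mul_assoc,
    mul_assoc (bE D * bE D) (TE D) (aE D), rel1, mul_add, mul_smul_comm,
    ← mul_assoc (bE D * bE D) (bE D) (TE D)]

lemma sym1 (Y : Module.End Kq (V 2)) (hY : Commute (TE D) Y) :
    SS D (Y * aE D) = qv • SS D (Y * bE D) := by
  calc SS D (Y * aE D) = SS D (TE D * (Y * aE D)) := (SS_dropL D _).symm
    _ = SS D (Y * (TE D * aE D)) := by rw [← mul_assoc, hY.eq, mul_assoc]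
    _ = SS D (Y * (bE D * TE D) + (qv - 1) • (Y * bE D)) := by
        rw [rel1, mul_add, mul_smul_comm]
    _ = SS D ((Y * bE D) * TE D) + (qv - 1) • SS D (Y * bE D) := by
        rw [SS_add, SS_smul, ← mul_assoc]
    _ = SS D (Y * bE D) + (qv - 1) • SS D (Y * bE D) := by rw [SS_dropR]
    _ = qv • SS D (Y * bE D) := genF qv _

lemma key3 (Y : Module.End Kq (V 2)) (hY : Commute (TE D) Y) :
    SS D (Y * aE D * aE D * aE D)
      - (qv + qv*tv + (qv*tv)⁻¹) • SS D (Y * aE D * aE D * bE D)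
      + (qv^2*tv + tv⁻¹ + 1) • SS D (Y * aE D * bE D * bE D)
      - qv • SS D (Y * bE D * bE D * bE D) = 0 := by
  have hK1 : SS D (Y * aE D * aE D * aE D)
      = SS D (Y * bE D * bE D * bE D) + (qv - 1) • SS D (Y * bE D * bE D * bE D)
        + (qv - 1) • SS D (Y * aE D * bE D * bE D)
        + (qv - 1) • SS D (Y * aE D * aE D * bE D) := by
    have hstep : TE D * (Y * aE D * aE D * aE D) = Y * (TE D * aE D * aE D * aE D) := by
      simp only [← mul_assoc]; rw [hY.eq]
    calc SS D (Y * aE D * aE D * aE D)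
        = SS D (TE D * (Y * aE D * aE D * aE D)) := (SS_dropL D _).symm
      _ = SS D (Y * (TE D * aE D * aE D * aE D)) := by rw [hstep]
      _ = SS D (Y * (bE D * bE D * bE D * TE D)
            + (qv - 1) • (Y * (bE D * bE D * bE D))
            + (qv - 1) • (Y * (bE D * bE D * aE D))
            + (qv - 1) • (Y * (bE D * aE D * aE D))) := by
          rw [hcube]; simp only [mul_add, mul_smul_comm]
      _ = SS D (Y * (bE D * bE D * bE D * TE D))
            + (qv - 1) • SS D (Y * (bE D * bE D * bE D))
            + (qv - 1) • SS D (Y * (bE D * bE D * aE D))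
            + (qv - 1) • SS D (Y * (bE D * aE D * aE D)) := by
          simp only [SS_add, SS_smul]
      _ = SS D (Y * bE D * bE D * bE D) + (qv - 1) • SS D (Y * bE D * bE D * bE D)
            + (qv - 1) • SS D (Y * aE D * bE D * bE D)
            + (qv - 1) • SS D (Y * aE D * aE D * bE D) := by
          rw [show Y * (bE D * bE D * bE D * TE D) = (Y * bE D * bE D * bE D) * TE D from by
              simp only [mul_assoc],
            SS_dropR,
            show Y * (bE D * bE D * bE D) = Y * bE D * bE D * bE D from by
              simp only [mul_assoc],
            show Y * (bE D * bE D * aE D) = Y * aE D * bE D * bE D from by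
              simp only [← mul_assoc]; rw [swapO D (Y * bE D), swapO D Y],
            show Y * (bE D * aE D * aE D) = Y * aE D * aE D * bE D from by
              simp only [← mul_assoc]; rw [swapO D Y, swapO D (Y * aE D)]]
  have hs : SS D (Y * aE D * aE D * bE D) = qv • SS D (Y * aE D * bE D * bE D) := by
    have hY' : Commute (TE D) (Y * (aE D * bE D)) := hY.mul_right (commTab D)
    have s := sym1 D (Y * (aE D * bE D)) hY'
    rw [show (Y * (aE D * bE D)) * aE D = Y * aE D * aE D * bE D from by
          simp only [← mul_assoc]; rw [swapO D (Y * aE D)],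
      show (Y * (aE D * bE D)) * bE D = Y * aE D * bE D * bE D from by
          simp only [← mul_assoc]] at s
    exact s
  rw [hK1, hs]
  exact genKey qv tv qv_ne tv_ne _ _

lemma mA (i j : ℤ) :
    ((↑(D.z 2 1 ^ i) : Module.End Kq (V 2)) * (↑(D.z 2 2 ^ j) : Module.End Kq (V 2))) * aE D
      = (↑(D.z 2 1 ^ (i+1)) : Module.End Kq (V 2)) * (↑(D.z 2 2 ^ j) : Module.End Kq (V 2)) := by
  have hc : Commute (aE D) ((↑(D.z 2 2 ^ j) : Module.End Kq (V 2))) := by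
    have : Commute (aE D) ((↑(D.z 2 2) : Module.End Kq (V 2))) := cab D
    exact this.units_zpow_right j
  rw [mul_assoc, ← hc.eq, ← mul_assoc]
  congr 1
  simp only [aE]
  rw [← Units.val_mul, ← zpow_add_one]

lemma mB (i j : ℤ) :
    ((↑(D.z 2 1 ^ i) : Module.End Kq (V 2)) * (↑(D.z 2 2 ^ j) : Module.End Kq (V 2))) * bE D
      = (↑(D.z 2 1 ^ i) : Module.End Kq (V 2)) * (↑(D.z 2 2 ^ (j+1)) : Module.End Kq (V 2)) := by
  rw [mul_assoc]
  congr 1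
  simp only [bE]
  rw [← Units.val_mul, ← zpow_add_one]

lemma mulApow (i j : ℤ) : ∀ d : ℕ,
    ((↑(D.z 2 1 ^ i) : Module.End Kq (V 2)) * (↑(D.z 2 2 ^ j) : Module.End Kq (V 2))) * (aE D)^d
      = (↑(D.z 2 1 ^ (i + (d:ℤ))) : Module.End Kq (V 2)) * (↑(D.z 2 2 ^ j) : Module.End Kq (V 2))
  | 0 => by norm_num
  | (d+1) => by
      rw [pow_succ, ← mul_assoc, mulApow i j d, mA,
        show i + (d:ℤ) + 1 = i + ((d:ℕ)+1 : ℕ) from by push_cast; ring]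

lemma mulBpow (i j : ℤ) : ∀ d : ℕ,
    ((↑(D.z 2 1 ^ i) : Module.End Kq (V 2)) * (↑(D.z 2 2 ^ j) : Module.End Kq (V 2))) * (bE D)^d
      = (↑(D.z 2 1 ^ i) : Module.End Kq (V 2)) * (↑(D.z 2 2 ^ (j + (d:ℤ))) : Module.End Kq (V 2))
  | 0 => by norm_num
  | (d+1) => by
      rw [pow_succ, ← mul_assoc, mulBpow i j d, mB,
        show j + (d:ℤ) + 1 = j + ((d:ℕ)+1 : ℕ) from by push_cast; ring]

lemma comm_sum_pow : ∀ d : ℕ, Commute (TE D) ((aE D)^d + (bE D)^d) := by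
  have base0 : Commute (TE D) ((aE D)^0 + (bE D)^0) := by
    simpa using (Commute.one_right (TE D)).add_right (Commute.one_right (TE D))
  have base1 : Commute (TE D) ((aE D)^1 + (bE D)^1) := by
    simpa using commTs1 D
  have step : ∀ d : ℕ, Commute (TE D) ((aE D)^d + (bE D)^d) →
      Commute (TE D) ((aE D)^(d+1) + (bE D)^(d+1)) →
      Commute (TE D) ((aE D)^(d+1+1) + (bE D)^(d+1+1)) := by
    intro d h0 h1
    have c1 : bE D * (aE D)^(d+1) = (aE D)^(d+1) * bE D := ((cab D).symm.pow_right (d+1)).eq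
    have c2 : aE D * bE D * (aE D)^d = (aE D)^(d+1) * bE D := by
      rw [mul_assoc, ((cab D).symm.pow_right d).eq, ← mul_assoc, ← pow_succ']
    have c3 : aE D * bE D * (bE D)^d = aE D * (bE D)^(d+1) := by
      rw [mul_assoc, ← pow_succ']
    have pident : (aE D)^(d+1+1) + (bE D)^(d+1+1)
        = (aE D + bE D) * ((aE D)^(d+1) + (bE D)^(d+1))
          - (aE D * bE D) * ((aE D)^d + (bE D)^d) := by
      rw [add_mul, mul_add, mul_add, mul_add, c1, c2, c3, ← pow_succ', ← pow_succ']
      abel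
    rw [pident]
    exact ((commTs1 D).mul_right h1).sub_right ((commTab D).mul_right h0)
  have main : ∀ d : ℕ, Commute (TE D) ((aE D)^d + (bE D)^d) ∧
      Commute (TE D) ((aE D)^(d+1) + (bE D)^(d+1)) := by
    intro d
    induction d with
    | zero => exact ⟨base0, base1⟩
    | succ k ih => exact ⟨ih.2, step k ih.1 ih.2⟩
  exact fun d => (main d).1

lemma commX (m : ℤ) :
    Commute (TE D) ((↑(D.z 2 1 ^ m) : Module.End Kq (V 2)) * (↑(D.z 2 2 ^ m) : Module.End Kq (V 2))) := by
  have hu : Commute (D.z 2 1) (D.z 2 2) :=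
    D.z_comm 2 1 2 (le_refl 1) (by norm_num) (by norm_num) (by norm_num)
  have h1 : Commute (TE D) ((↑(D.z 2 1 * D.z 2 2) : Module.End Kq (V 2))) := by
    rw [Units.val_mul]
    exact commTab D
  have h2 := h1.units_zpow_right m
  rw [hu.mul_zpow, Units.val_mul] at h2
  exact h2

lemma factor (m : ℤ) (d : ℕ) :
    ((↑(D.z 2 1 ^ m) : Module.End Kq (V 2)) * (↑(D.z 2 2 ^ m) : Module.End Kq (V 2)))
        * ((aE D)^d + (bE D)^d)
      = (↑(D.z 2 1 ^ (m + (d:ℤ))) : Module.End Kq (V 2)) * (↑(D.z 2 2 ^ m) : Module.End Kq (V 2))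
        + (↑(D.z 2 1 ^ m) : Module.End Kq (V 2)) * (↑(D.z 2 2 ^ (m + (d:ℤ))) : Module.End Kq (V 2)) := by
  rw [mul_add, mulApow, mulBpow]

lemma commTXY (m : ℤ) (d : ℕ) :
    Commute (TE D)
      ((↑(D.z 2 1 ^ (m + (d:ℤ))) : Module.End Kq (V 2)) * (↑(D.z 2 2 ^ m) : Module.End Kq (V 2))
        + (↑(D.z 2 1 ^ m) : Module.End Kq (V 2)) * (↑(D.z 2 2 ^ (m + (d:ℤ))) : Module.End Kq (V 2))) := by
  rw [← factor]
  exact (commX D m).mul_right (comm_sum_pow D d)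

lemma commTf (m n : ℤ) :
    Commute (TE D)
      ((↑(D.z 2 1 ^ n) : Module.End Kq (V 2)) * (↑(D.z 2 2 ^ m) : Module.End Kq (V 2))
        + (↑(D.z 2 1 ^ m) : Module.End Kq (V 2)) * (↑(D.z 2 2 ^ n) : Module.End Kq (V 2))) := by
  rcases le_total m n with h | h
  · obtain ⟨d, hd⟩ : ∃ d : ℕ, n = m + (d:ℤ) := ⟨(n-m).toNat, by omega⟩
    rw [hd]
    exact commTXY D m d
  · obtain ⟨d, hd⟩ : ∃ d : ℕ, m = n + (d:ℤ) := ⟨(m-n).toNat, by omega⟩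
    rw [hd, add_comm]
    exact commTXY D n d

lemma SigmaE (m n : ℤ) :
    (EE D (n+3) m + EE D (m+3) n)
      - (qv + qv*tv + (qv*tv)⁻¹) • (EE D (n+2) (m+1) + EE D (m+2) (n+1))
      + (qv^2*tv + tv⁻¹ + 1) • (EE D (n+1) (m+2) + EE D (m+1) (n+2))
      - qv • (EE D n (m+3) + EE D m (n+3)) = 0 := by
  have k := key3 D _ (commTf D m n)
  simp only [add_mul, mA, mB,
    show ∀ x : ℤ, x+1+1 = x+2 from fun x => by ring,
    show ∀ x : ℤ, x+2+1 = x+3 from fun x => by ring] at k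
  simp only [SS_add] at k
  simp only [EE]
  exact k

lemma hRq (a b : ℤ) :
    qv • (eOp D (a+1) * eOp D b) - EE D (a+1) b
      = (qv*tv) • (eOp D a * eOp D (b+1)) - (qv*tv) • EE D a (b+1) := by
  have happ : ∀ (c : ℤ) (v : V 1), (↑(D.z 1 1 ^ c) : Module.End Kq (V 1))
      ((↑(D.z 1 1) : Module.End Kq (V 1)) v) = (↑(D.z 1 1 ^ (c+1)) : Module.End Kq (V 1)) v := by
    intro c v
    rw [← Module.End.mul_apply, ← Units.val_mul, ← zpow_add_one]
  have happ' : ∀ (c : ℤ) (v : V 1), (↑(D.z 1 1) : Module.End Kq (V 1))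
      ((↑(D.z 1 1 ^ c) : Module.End Kq (V 1)) v) = (↑(D.z 1 1 ^ (c+1)) : Module.End Kq (V 1)) v := by
    intro c v
    rw [← Module.End.mul_apply, ← Units.val_mul,
      show D.z 1 1 * D.z 1 1 ^ c = D.z 1 1 ^ (c+1) from by group]
  have hdm : ∀ (c : ℤ) (u : V 2), (↑(D.z 1 1 ^ c) : Module.End Kq (V 1)) (D.dm 1 u)
      = D.dm 1 ((↑(D.z 2 1 ^ c) : Module.End Kq (V 2)) u) := by
    intro c u
    have h0 : (↑(D.z 1 1) : Module.End Kq (V 1)) ∘ₗ D.dm 1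
        = D.dm 1 ∘ₗ (↑(D.z 2 1) : Module.End Kq (V 2)) := by
      have := D.zdm 1 1 (le_refl 1) (le_refl 1)
      simpa using this
    have h1 := LinearMap.congr_fun (inter_zpow (D.dm 1) (D.z 2 1) (D.z 1 1) h0 c) u
    simpa using h1
  have hdp : ∀ (c : ℤ) (u : V 1), D.dp 1 ((↑(D.z 1 1 ^ c) : Module.End Kq (V 1)) u)
      = (↑(D.z 2 2 ^ c) : Module.End Kq (V 2)) (D.dp 1 u) := by
    intro c u
    have h0 : (↑(D.z 2 2) : Module.End Kq (V 2)) ∘ₗ D.dp 1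
        = D.dp 1 ∘ₗ (↑(D.z 1 1) : Module.End Kq (V 1)) := by
      have := (D.dpz 1 1 (le_refl 1) (le_refl 1)).symm
      simpa using this
    have h1 := LinearMap.congr_fun (inter_zpow (D.dp 1) (D.z 1 1) (D.z 2 2) h0 c) u
    simp only [LinearMap.comp_apply] at h1
    exact h1.symm
  ext x
  have base := LinearMap.congr_fun (D.zmain 0)
    ((↑(D.z 1 1 ^ b) : Module.End Kq (V 1)) (D.dp 0 x))
  simp only [Nat.reduceAdd, LinearMap.comp_apply, LinearMap.sub_apply, LinearMap.smul_apply,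
    map_sub, map_smul] at base
  have base2 := congrArg (fun v : V 1 => D.dm 0 ((↑(D.z 1 1 ^ a) : Module.End Kq (V 1)) v)) base
  simp only [map_sub, map_smul] at base2
  simp only [happ, happ'] at base2
  simp only [hdm, hdp] at base2
  simp only [BqtDatum.eOp, EE, SS, Module.End.mul_apply, LinearMap.comp_apply,
    LinearMap.sub_apply, LinearMap.smul_apply]
  rw [← smul_sub]
  exact base2

end BqtAux

open BqtDatum in
/-- the quadratic relation of the elliptic Hall algebra, with
σ₁ = q + t + q^{−1}t^{−1} and σ₂ = qt + q^{−1} + t^{−1}. -/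
theorem stmt8 (V : ℕ → Type*) [∀ k, AddCommGroup (V k)] [∀ k, Module Kq (V k)]
    (D : BqtDatum V) (m n : ℤ) :
    eOp D (n + 3) * eOp D m - (qv + tv + (qv * tv)⁻¹) • (eOp D (n + 2) * eOp D (m + 1)) +
        (qv * tv + qv⁻¹ + tv⁻¹) • (eOp D (n + 1) * eOp D (m + 2)) - eOp D n * eOp D (m + 3) =
      -(eOp D (m + 3) * eOp D n) + (qv + tv + (qv * tv)⁻¹) • (eOp D (m + 2) * eOp D (n + 1)) -
        (qv * tv + qv⁻¹ + tv⁻¹) • (eOp D (m + 1) * eOp D (n + 2)) + eOp D m * eOp D (n + 3) := by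
  have SigE := BqtAux.SigmaE D m n
  have h1 := BqtAux.hRq D (n+2) m
  have h2 := BqtAux.hRq D (n+1) (m+1)
  have h3 := BqtAux.hRq D n (m+2)
  have h4 := BqtAux.hRq D (m+2) n
  have h5 := BqtAux.hRq D (m+1) (n+1)
  have h6 := BqtAux.hRq D m (n+2)
  rw [show n+2+1 = n+3 from by ring] at h1
  rw [show n+1+1 = n+2 from by ring, show m+1+1 = m+2 from by ring] at h2
  rw [show m+2+1 = m+3 from by ring] at h3
  rw [show m+2+1 = m+3 from by ring] at h4
  rw [show m+1+1 = m+2 from by ring, show n+1+1 = n+2 from by ring] at h5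
  rw [show n+2+1 = n+3 from by ring] at h6
  exact BqtAux.genFinal qv tv BqtAux.qv_ne BqtAux.tv_ne _ _ _ _ _ _ _ _ _ _ _ _ _ _ _ _
    SigE h1 h2 h3 h4 h5 h6

end
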